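/- Let a, b ∈ ℝ with a ≠ 1/3, let T > 0, μ > 0, z₀ ∈ ℝ, and let q, h, w, z : [0, T] → ℝ be continuously differentiable functions satisfying the (q,h,w,z) system with parameters a, b, with q(0) = μ and z(0) = z₀. Suppose q(t) ∈ [0, μ] for all t ∈ [0, T] and that L_a(r) ≠ 0 with constant sign for all r ∈ [0, μ]. Define g(r) = z₀ · (|L_a(r)|/|L_a(μ)|)^{(2−b)/(2(1−3a))} / L_a(r). Then for all t ∈ [0, T], h(t)² = h(0)² − 2(2 − b)·∫_{μ}^{q(t)} (1 + e^{−r})·e^{−r}·g(r) dr. -/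

import Mathlib

open Real Set intervalIntegral

/-- The `(q,h,w,z)` ODE system with parameters `a`, `b`, holding (in the sense of one-sided
derivatives within `s`) at every point of `s`. -/
def QHWZSystem (a b : ℝ) (s : Set ℝ) (q h w z : ℝ → ℝ) : Prop :=
  ∀ t ∈ s,
    HasDerivWithinAt q (h t * w t * (1 - a - (1 - 3 * a) * Real.exp (-(2 * q t)))) s t ∧
    HasDerivWithinAt h (-(2 - b) * w t * z t * (1 + Real.exp (-q t)) * Real.exp (-q t)) s t ∧
    HasDerivWithinAt w (-(2 - b) * h t * z t * (1 - Real.exp (-q t)) * Real.exp (-q t)) s t ∧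
    HasDerivWithinAt z ((2 - b) * h t * w t * z t * Real.exp (-(2 * q t))) s t

/-- `L_a(r) = 1 - a - (1 - 3a)e^{-2r}`. -/
noncomputable def Lfun (a r : ℝ) : ℝ := 1 - a - (1 - 3 * a) * Real.exp (-(2 * r))

/-- Constancy on `Icc` from vanishing derivative within `Icc`. -/
theorem my_const_of_deriv_zero {f : ℝ → ℝ} {T : ℝ}
    (hd : ∀ t ∈ Icc (0 : ℝ) T, HasDerivWithinAt f 0 (Icc (0 : ℝ) T) t) :
    ∀ t ∈ Icc (0 : ℝ) T, f t = f 0 := by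
  apply constant_of_has_deriv_right_zero
  · exact fun t ht => (hd t ht).continuousWithinAt
  · intro x hx
    have h1 : HasDerivWithinAt f 0 (Icc x T) x :=
      (hd x ⟨hx.1, hx.2.le⟩).mono (Icc_subset_Icc hx.1 le_rfl)
    exact h1.mono_of_mem_nhdsWithin (Icc_mem_nhdsGE_of_mem ⟨le_rfl, hx.2⟩)

theorem h_squared_formula (a b T μ z₀ : ℝ) (ha : a ≠ 1 / 3) (hT : 0 < T) (hμ : 0 < μ)
    (q h w z : ℝ → ℝ)
    (hsys : QHWZSystem a b (Set.Icc 0 T) q h w z)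
    (hq0 : q 0 = μ) (hz0 : z 0 = z₀)
    (hrange : ∀ t ∈ Set.Icc (0 : ℝ) T, q t ∈ Set.Icc 0 μ)
    (hsign : (∀ r ∈ Set.Icc (0 : ℝ) μ, 0 < Lfun a r) ∨ (∀ r ∈ Set.Icc (0 : ℝ) μ, Lfun a r < 0)) :
    ∀ t ∈ Set.Icc (0 : ℝ) T,
      h t ^ 2 = h 0 ^ 2 - 2 * (2 - b) *
        ∫ r in μ..q t,
          (1 + Real.exp (-r)) * Real.exp (-r) *
            (z₀ * (|Lfun a r| / |Lfun a μ|) ^ ((2 - b) / (2 * (1 - 3 * a))) / Lfun a r) := by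
  have h13 : (1 : ℝ) - 3 * a ≠ 0 := by
    intro h0; apply ha; linarith
  set c : ℝ := (2 - b) / (2 * (1 - 3 * a)) with hc
  have hc2 : c * (2 * (1 - 3 * a)) = 2 - b :=
    div_mul_cancel₀ _ (mul_ne_zero two_ne_zero h13)
  -- choose the sign ε
  obtain ⟨ε, hε⟩ : ∃ ε : ℝ, ∀ r ∈ Icc (0 : ℝ) μ,
      0 < ε * Lfun a r ∧ |Lfun a r| = ε * Lfun a r := by
    rcases hsign with hs | hs
    · exact ⟨1, fun r hr => by
        have := hs r hr; constructor <;> simp [abs_of_pos this, this]⟩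
    · exact ⟨-1, fun r hr => by
        have := hs r hr; constructor
        · nlinarith
        · rw [abs_of_neg this]; ring⟩
  have hμmem : μ ∈ Icc (0 : ℝ) μ := ⟨hμ.le, le_rfl⟩
  have hLμpos : 0 < ε * Lfun a μ := (hε μ hμmem).1
  have hLne : ∀ r ∈ Icc (0 : ℝ) μ, Lfun a r ≠ 0 := by
    intro r hr h0
    have := (hε r hr).1
    rw [h0, mul_zero] at this; exact lt_irrefl _ this
  -- derivative of t ↦ Lfun a (q t)
  have hqd : ∀ t ∈ Icc (0 : ℝ) T,
      HasDerivWithinAt q (h t * w t * Lfun a (q t)) (Icc (0 : ℝ) T) t := by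
    intro t ht
    exact (hsys t ht).1
  have hLq : ∀ t ∈ Icc (0 : ℝ) T,
      HasDerivWithinAt (fun s => Lfun a (q s))
        (2 * (1 - 3 * a) * Real.exp (-(2 * q t)) * (h t * w t * Lfun a (q t)))
        (Icc (0 : ℝ) T) t := by
    intro t ht
    have h1 : HasDerivWithinAt (fun s => -(2 * q s))
        (-(2 * (h t * w t * Lfun a (q t)))) (Icc (0 : ℝ) T) t :=
      ((hqd t ht).const_mul 2).neg
    have h2 := h1.exp
    have h3 := h2.const_mul (1 - 3 * a)
    have h4 : HasDerivWithinAt (fun s => Lfun a (q s))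
        (0 - (1 - 3 * a) * (Real.exp (-(2 * q t)) * (-(2 * (h t * w t * Lfun a (q t))))))
        (Icc (0 : ℝ) T) t :=
      (hasDerivWithinAt_const t (Icc (0 : ℝ) T) (1 - a : ℝ)).sub h3
    convert h4 using 1
    ring
  -- ℓ t = ε * Lfun a (q t)
  have hℓpos : ∀ t ∈ Icc (0 : ℝ) T, 0 < ε * Lfun a (q t) := fun t ht =>
    (hε (q t) (hrange t ht)).1
  have hℓd : ∀ t ∈ Icc (0 : ℝ) T,
      HasDerivWithinAt (fun s => ε * Lfun a (q s))
        (2 * (1 - 3 * a) * Real.exp (-(2 * q t)) * (h t * w t) * (ε * Lfun a (q t)))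
        (Icc (0 : ℝ) T) t := by
    intro t ht
    have := (hLq t ht).const_mul ε
    exact this.congr_deriv (by ring)
  -- the power function ℓ^c
  have hpowd : ∀ t ∈ Icc (0 : ℝ) T,
      HasDerivWithinAt (fun s => (ε * Lfun a (q s)) ^ c)
        ((2 * (1 - 3 * a) * Real.exp (-(2 * q t)) * (h t * w t) * (ε * Lfun a (q t))) * c *
          (ε * Lfun a (q t)) ^ (c - 1))
        (Icc (0 : ℝ) T) t := by
    intro t ht
    exact (hℓd t ht).rpow_const (Or.inl (ne_of_gt (hℓpos t ht)))
  have hpowpos : ∀ t ∈ Icc (0 : ℝ) T, 0 < (ε * Lfun a (q t)) ^ c := fun t ht =>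
    Real.rpow_pos_of_pos (hℓpos t ht) c
  -- step 1 : z t * ℓ 0 ^ c = z₀ * ℓ t ^ c
  have hDconst : ∀ t ∈ Icc (0 : ℝ) T,
      z t / (ε * Lfun a (q t)) ^ c = z 0 / (ε * Lfun a (q 0)) ^ c := by
    apply my_const_of_deriv_zero
    intro t ht
    have hzd := (hsys t ht).2.2.2
    have h6 := hzd.div (hpowd t ht) (ne_of_gt (hpowpos t ht))
    refine h6.congr_deriv ?_
    rw [div_eq_zero_iff]
    left
    have h5 : (ε * Lfun a (q t)) ^ (c - 1) * (ε * Lfun a (q t)) = (ε * Lfun a (q t)) ^ c := by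
      rw [← Real.rpow_add_one (ne_of_gt (hℓpos t ht)), sub_add_cancel]
    calc (2 - b) * h t * w t * z t * Real.exp (-(2 * q t)) * (ε * Lfun a (q t)) ^ c -
          z t * (2 * (1 - 3 * a) * Real.exp (-(2 * q t)) * (h t * w t) * (ε * Lfun a (q t)) * c *
            (ε * Lfun a (q t)) ^ (c - 1))
        = h t * w t * z t * Real.exp (-(2 * q t)) *
            ((2 - b) * (ε * Lfun a (q t)) ^ c -
              (c * (2 * (1 - 3 * a))) * ((ε * Lfun a (q t)) ^ (c - 1) * (ε * Lfun a (q t)))) := by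
          ring
      _ = 0 := by rw [h5, hc2]; ring
  have hzf : ∀ t ∈ Icc (0 : ℝ) T,
      z t = z₀ * ((ε * Lfun a (q t)) ^ c / (ε * Lfun a μ) ^ c) := by
    intro t ht
    have hqc : (0 : ℝ) < (ε * Lfun a (q t)) ^ c := hpowpos t ht
    have hμp : (0 : ℝ) < (ε * Lfun a μ) ^ c := Real.rpow_pos_of_pos hLμpos c
    have := hDconst t ht
    rw [hq0, hz0, div_eq_div_iff (ne_of_gt hqc) (ne_of_gt hμp)] at this
    field_simp
    linarith [this]
  -- step 2 : the integrand and its antiderivative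
  set f : ℝ → ℝ := fun r => (1 + Real.exp (-r)) * Real.exp (-r) *
      (z₀ * (|Lfun a r| / |Lfun a μ|) ^ c / Lfun a r) with hf
  have hLcont : Continuous (Lfun a) := by
    have hrfl : Lfun a = fun r => 1 - a - (1 - 3 * a) * Real.exp (-(2 * r)) := rfl
    rw [hrfl]
    exact continuous_const.sub (continuous_const.mul
      (Real.continuous_exp.comp (continuous_const.mul continuous_id).neg))
  have hfc : ContinuousOn f (Icc (0 : ℝ) μ) := by
    apply ContinuousOn.mul
    · exact ((continuous_const.add (Real.continuous_exp.comp continuous_neg)).mul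
        (Real.continuous_exp.comp continuous_neg)).continuousOn
    · apply ContinuousOn.div
      · apply ContinuousOn.mul continuousOn_const
        apply ContinuousOn.rpow_const
        · exact (hLcont.abs.continuousOn.div_const _)
        · intro r hr
          left
          have h1 := hLne r hr
          have h2 := hLne μ hμmem
          simp only [ne_eq, div_eq_zero_iff, abs_eq_zero]
          push_neg
          exact ⟨h1, h2⟩
      · exact hLcont.continuousOn
      · exact hLne
  have hfint : ∀ x ∈ Icc (0 : ℝ) μ, IntervalIntegrable f MeasureTheory.volume μ x := by
    intro x hx
    exact (hfc.mono (uIcc_subset_Icc hμmem hx)).intervalIntegrable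
  set F : ℝ → ℝ := fun x => ∫ r in μ..x, f r with hF
  have hFd : ∀ x ∈ Icc (0 : ℝ) μ, HasDerivWithinAt F (f x) (Icc (0 : ℝ) μ) x := by
    intro x hx
    haveI : Fact (x ∈ Icc (0 : ℝ) μ) := ⟨hx⟩
    exact intervalIntegral.integral_hasDerivWithinAt_right (hfint x hx)
      (hfc.stronglyMeasurableAtFilter_nhdsWithin measurableSet_Icc x) (hfc x hx)
  -- f (q t) * q' t = (1+e^{-q})e^{-q} h w z
  have hkey : ∀ t ∈ Icc (0 : ℝ) T,
      f (q t) * (h t * w t * Lfun a (q t)) =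
        (1 + Real.exp (-q t)) * Real.exp (-q t) * (h t * w t) * z t := by
    intro t ht
    have hqt := hrange t ht
    have habs1 : |Lfun a (q t)| = ε * Lfun a (q t) := (hε (q t) hqt).2
    have habs2 : |Lfun a μ| = ε * Lfun a μ := (hε μ hμmem).2
    have hdiv : (|Lfun a (q t)| / |Lfun a μ|) ^ c =
        (ε * Lfun a (q t)) ^ c / (ε * Lfun a μ) ^ c := by
      rw [habs1, habs2, Real.div_rpow (hℓpos t ht).le (le_of_lt hLμpos)]
    rw [hf]
    simp only
    rw [hdiv, hzf t ht]
    have hLqne : Lfun a (q t) ≠ 0 := hLne (q t) hqt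
    field_simp
  -- constancy of Φ
  have hΦ : ∀ t ∈ Icc (0 : ℝ) T,
      h t ^ 2 + 2 * (2 - b) * F (q t) = h 0 ^ 2 + 2 * (2 - b) * F (q 0) := by
    apply my_const_of_deriv_zero
    intro t ht
    have hhd := (hsys t ht).2.1
    have hh2 : HasDerivWithinAt (fun s => h s ^ 2)
        (2 * h t ^ 1 * (-(2 - b) * w t * z t * (1 + Real.exp (-q t)) * Real.exp (-q t)))
        (Icc (0 : ℝ) T) t := by
      simpa using hhd.fun_pow 2
    have hcomp : HasDerivWithinAt (F ∘ q) (f (q t) * (h t * w t * Lfun a (q t)))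
        (Icc (0 : ℝ) T) t :=
      (hFd (q t) (hrange t ht)).comp (x := t) (hqd t ht) (fun s hs => hrange s hs)
    have hsum := hh2.add ((hcomp.const_mul (2 * (2 - b))))
    refine hsum.congr_deriv ?_
    rw [hkey t ht]
    ring
  -- conclude
  intro t ht
  have h1 := hΦ t ht
  have h2 : F (q 0) = 0 := by
    rw [hq0, hF]; simp [intervalIntegral.integral_same]
  rw [h2] at h1
  show h t ^ 2 = h 0 ^ 2 - 2 * (2 - b) * F (q t)
  linarith
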